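/- Let α > 0 be a real number and let S₊ ⊂ S^{n−1} be a measurable subset of the unit sphere with the following Poincaré-type property: for all v ∈ H¹₀(S₊), ∫ |∇_{S} v|² dσ ≥ (1/α) ∫ v² dσ. Let β = (√α/2)(√((n−2)² + 4/α) − (n−2)) ∈ (0,1) and γ = β/√α. Then for every smooth function u on S^{n−1} vanishing outside S₊ and every measurable vector field of the form ∇u = (∂_ρ u) x̂ + ∇_S u (orthogonal decomposition), one has ∫_{S^{n−1}} (|∂_ρ u|² + |∇_S u|²) dσ ≥ γ ( 2∫_{S^{n−1}} |u · ∂_ρ u| dσ + (n−2) ∫_{S^{n−1}} u² dσ ). -/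

import Mathlib

/-!
Pointwise, `2γ|u ∂ρu| ≤ (∂ρu)² + γ² u²`. Since `γ = (√((n-2)² + 4/α) - (n-2)) / 2` is a root of
`γ² + (n-2)γ = 1/α`, this gives `γ (2|u ∂ρu| + (n-2)u²) ≤ (∂ρu)² + u²/α`, and after integration the
Poincaré inequality bounds `∫ u²/α` by `∫ |∇_S u|²`.
-/

open MeasureTheory Real

lemma sq_add_mul_eq_of_eq_half_sqrt_sub {m α γ : ℝ} (hα : 0 ≤ α)
    (hγ : γ = (√(m ^ 2 + 4 / α) - m) / 2) : γ ^ 2 + m * γ = 1 / α := by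
  have hsq := Real.sq_sqrt (by positivity : 0 ≤ m ^ 2 + 4 / α)
  subst hγ
  linear_combination hsq / 4

lemma two_mul_mul_abs_mul_le (t a b : ℝ) : 2 * t * |a * b| ≤ b ^ 2 + t ^ 2 * a ^ 2 := by
  rw [abs_mul]
  nlinarith [sq_nonneg (|b| - t * |a|), sq_abs a, sq_abs b]

lemma two_mul_integral_abs_mul_le {X : Type*} [MeasurableSpace X] {μ : Measure X} {f g : X → ℝ}
    (hf : MemLp f 2 μ) (hg : MemLp g 2 μ) (t : ℝ) :
    2 * t * ∫ x, |f x * g x| ∂μ ≤ ∫ x, g x ^ 2 ∂μ + t ^ 2 * ∫ x, f x ^ 2 ∂μ := by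
  have hfg : Integrable (fun x ↦ |f x * g x|) μ := (hf.integrable_mul hg).abs
  calc 2 * t * ∫ x, |f x * g x| ∂μ = ∫ x, 2 * t * |f x * g x| ∂μ := (integral_const_mul _ _).symm
    _ ≤ ∫ x, (g x ^ 2 + t ^ 2 * f x ^ 2) ∂μ :=
        integral_mono (hfg.const_mul _) (hg.integrable_sq.add (hf.integrable_sq.const_mul _))
          fun x ↦ two_mul_mul_abs_mul_le t (f x) (g x)
    _ = ∫ x, g x ^ 2 ∂μ + t ^ 2 * ∫ x, f x ^ 2 ∂μ := by
        rw [integral_add hg.integrable_sq (hf.integrable_sq.const_mul _), integral_const_mul]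

/-- `(X, σ)` stands for the unit sphere with its surface measure, `uρ` for the radial derivative
of `u` and `gS` for the norm of its tangential gradient. -/
theorem stmt16_general {X : Type*} [MeasurableSpace X] (σ : Measure X)
    (n : ℕ) (α : ℝ) (hα : 0 < α)
    (u uρ gS : X → ℝ)
    (hu : MemLp u 2 σ) (huρ : MemLp uρ 2 σ) (hgS : MemLp gS 2 σ)
    (hPoincare : ∫ x, gS x ^ 2 ∂σ ≥ (1 / α) * ∫ x, u x ^ 2 ∂σ)
    (β γ : ℝ)
    (hβ : β = (Real.sqrt α / 2) *
      (Real.sqrt (((n : ℝ) - 2) ^ 2 + 4 / α) - ((n : ℝ) - 2)))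
    (hγ : γ = β / Real.sqrt α) :
    ∫ x, (uρ x ^ 2 + gS x ^ 2) ∂σ ≥
      γ * (2 * (∫ x, |u x * uρ x| ∂σ) + ((n : ℝ) - 2) * ∫ x, u x ^ 2 ∂σ) := by
  have hγ_root : γ ^ 2 + ((n : ℝ) - 2) * γ = 1 / α := by
    refine sq_add_mul_eq_of_eq_half_sqrt_sub hα.le ?_
    rw [hγ, hβ]
    field_simp [(Real.sqrt_pos.2 hα).ne']
  have hYoung := two_mul_integral_abs_mul_le hu huρ γ
  rw [integral_add huρ.integrable_sq hgS.integrable_sq]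
  linear_combination hYoung + hPoincare + (∫ x, u x ^ 2 ∂σ) * hγ_root

/-- An abstract form of the spherical eigenvalue estimate: on a measure space `(X, σ)`
(standing for the unit sphere with surface measure), `u` is a function supported in `S₊`,
`uρ` its radial derivative and `gS` the norm of its tangential gradient. -/
theorem stmt16 {X : Type*} [MeasurableSpace X] (σ : Measure X)
    (n : ℕ) (hn : 3 ≤ n) (α : ℝ) (hα : 0 < α)
    (Splus : Set X) (hSplus : MeasurableSet Splus)
    (u uρ gS : X → ℝ)
    (hu : MemLp u 2 σ) (huρ : MemLp uρ 2 σ) (hgS : MemLp gS 2 σ)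
    (hsupp : ∀ x ∉ Splus, u x = 0)
    (hPoincare : ∫ x, gS x ^ 2 ∂σ ≥ (1 / α) * ∫ x, u x ^ 2 ∂σ)
    (β γ : ℝ)
    (hβ : β = (Real.sqrt α / 2) *
      (Real.sqrt (((n : ℝ) - 2) ^ 2 + 4 / α) - ((n : ℝ) - 2)))
    (hβ01 : β ∈ Set.Ioo (0 : ℝ) 1)
    (hγ : γ = β / Real.sqrt α) :
    ∫ x, (uρ x ^ 2 + gS x ^ 2) ∂σ ≥
      γ * (2 * (∫ x, |u x * uρ x| ∂σ) + ((n : ℝ) - 2) * ∫ x, u x ^ 2 ∂σ) :=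
  stmt16_general σ n α hα u uρ gS hu huρ hgS hPoincare β γ hβ hγ
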